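/- arXiv:2511.06451 — 2 statements merged into one kernel-verified Lean document; each statement's English description precedes it below -/
import Mathlib

section
/- Let f : [a,b] → ℝ be of bounded variation with total variation V. For a partition a = x₀ < x₁ < ⋯ < x_n = b with mesh Δ := max_i (x_i − x_{i−1}), the midpoint Riemann sum satisfies |∫_a^b f(x) dx − ∑_{i=1}^n (x_i − x_{i−1}) f(m_i)| ≤ V·Δ, where m_i := (x_{i−1} + x_i)/2. -/
/-- midpoint Riemann-sum quadrature error for a function of bounded
variation `V` on `[a,b]` with partition mesh `Δ` is at most `V·Δ`. -/
theorem stmt_7 (f : ℝ → ℝ) (a b Δ : ℝ) (hab : a ≤ b)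
    (hBV : BoundedVariationOn f (Set.Icc a b))
    (n : ℕ) (hn : 0 < n) (x : ℕ → ℝ)
    (hx0 : x 0 = a) (hxn : x n = b)
    (hmono : ∀ i < n, x i < x (i + 1))
    (hmesh : ∀ i < n, x (i + 1) - x i ≤ Δ) :
    |(∫ t in a..b, f t) -
        ∑ i ∈ Finset.range n, (x (i + 1) - x i) * f ((x i + x (i + 1)) / 2)| ≤
      (eVariationOn f (Set.Icc a b)).toReal * Δ := by
  -- monotonicity of partition points
  have hle : ∀ j ≤ n, ∀ i ≤ j, x i ≤ x j := by
    intro j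
    induction j with
    | zero => intro _ i hi; simp [Nat.le_zero.mp hi]
    | succ k ih =>
      intro hj i hi
      rcases Nat.lt_or_ge i (k+1) with h | h
      · exact le_trans (ih (le_of_lt (Nat.lt_of_succ_le hj)) i (Nat.lt_succ_iff.mp h))
          (le_of_lt (hmono k (Nat.lt_of_succ_le hj)))
      · have : i = k + 1 := le_antisymm hi h
        subst this; exact le_rfl
  have hmem : ∀ i ≤ n, x i ∈ Set.Icc a b := by
    intro i hi
    constructor
    · rw [← hx0]; exact hle i hi 0 (Nat.zero_le _)
    · rw [← hxn]; exact hle n le_rfl i hi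
  have hsub : ∀ i < n, Set.Icc (x i) (x (i+1)) ⊆ Set.Icc a b := by
    intro i hi
    exact Set.Icc_subset_Icc (hmem i hi.le).1 (hmem (i+1) hi).2
  -- integrability
  obtain ⟨p, q, hp, hq, hpq⟩ :=
    hBV.locallyBoundedVariationOn.exists_monotoneOn_sub_monotoneOn
  have hint : ∀ i < n, IntervalIntegrable f MeasureTheory.volume (x i) (x (i+1)) := by
    intro i hi
    have huIcc : Set.uIcc (x i) (x (i+1)) = Set.Icc (x i) (x (i+1)) :=
      Set.uIcc_of_le (hmono i hi).le
    have hsubi := hsub i hi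
    have hip : IntervalIntegrable p MeasureTheory.volume (x i) (x (i+1)) :=
      MonotoneOn.intervalIntegrable (by rw [huIcc]; exact hp.mono hsubi)
    have hiq : IntervalIntegrable q MeasureTheory.volume (x i) (x (i+1)) :=
      MonotoneOn.intervalIntegrable (by rw [huIcc]; exact hq.mono hsubi)
    rw [hpq]; exact hip.sub hiq
  -- split the integral
  have hsplit : (∫ t in a..b, f t)
      = ∑ i ∈ Finset.range n, ∫ t in (x i)..(x (i+1)), f t := by
    rw [← hx0, ← hxn]
    exact (intervalIntegral.sum_integral_adjacent_intervals hint).symm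
  rw [hsplit, ← Finset.sum_sub_distrib]
  -- per-interval bound
  set Vi : ℕ → ENNReal := fun i => eVariationOn f (Set.Icc (x i) (x (i+1))) with hVi
  have hViFin : ∀ i < n, Vi i ≠ ⊤ := fun i hi => hBV.mono (hsub i hi)
  have hΔ0 : 0 ≤ Δ := le_trans (sub_pos.mpr (hmono 0 hn)).le (hmesh 0 hn)
  have hterm : ∀ i < n,
      |(∫ t in (x i)..(x (i+1)), f t) - (x (i+1) - x i) * f ((x i + x (i+1)) / 2)|
        ≤ (Vi i).toReal * (x (i+1) - x i) := by
    intro i hi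
    have hxi := (hmono i hi).le
    have hmid : (x i + x (i+1)) / 2 ∈ Set.Icc (x i) (x (i+1)) := by
      constructor <;> [linarith; linarith]
    have hBVi : BoundedVariationOn f (Set.Icc (x i) (x (i+1))) := hBV.mono (hsub i hi)
    have hconst : (x (i+1) - x i) * f ((x i + x (i+1)) / 2)
        = ∫ t in (x i)..(x (i+1)), f ((x i + x (i+1)) / 2) := by
      rw [intervalIntegral.integral_const, smul_eq_mul]
    rw [hconst, ← intervalIntegral.integral_sub (hint i hi) intervalIntegrable_const]
    have := intervalIntegral.norm_integral_le_of_norm_le_const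
      (a := x i) (b := x (i+1)) (C := (Vi i).toReal)
      (f := fun t => f t - f ((x i + x (i+1)) / 2)) ?_
    · calc |∫ t in (x i)..(x (i+1)), (f t - f ((x i + x (i+1)) / 2))|
          ≤ (Vi i).toReal * |x (i+1) - x i| := this
        _ = (Vi i).toReal * (x (i+1) - x i) := by rw [abs_of_nonneg (by linarith)]
    · intro t ht
      rw [Set.uIoc_of_le hxi] at ht
      have htm : t ∈ Set.Icc (x i) (x (i+1)) := ⟨ht.1.le, ht.2⟩
      have := hBVi.dist_le htm hmid
      rwa [Real.dist_eq] at this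
  -- sum up
  calc |∑ i ∈ Finset.range n,
        ((∫ t in (x i)..(x (i+1)), f t) - (x (i+1) - x i) * f ((x i + x (i+1)) / 2))|
      ≤ ∑ i ∈ Finset.range n,
        |(∫ t in (x i)..(x (i+1)), f t) - (x (i+1) - x i) * f ((x i + x (i+1)) / 2)| :=
        Finset.abs_sum_le_sum_abs _ _
    _ ≤ ∑ i ∈ Finset.range n, (Vi i).toReal * Δ := by
        apply Finset.sum_le_sum
        intro i hi
        rw [Finset.mem_range] at hi
        exact le_trans (hterm i hi)
          (mul_le_mul_of_nonneg_left (hmesh i hi) ENNReal.toReal_nonneg)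
    _ = (∑ i ∈ Finset.range n, (Vi i).toReal) * Δ := by rw [Finset.sum_mul]
    _ ≤ (eVariationOn f (Set.Icc a b)).toReal * Δ := by
        apply mul_le_mul_of_nonneg_right _ hΔ0
        rw [← ENNReal.toReal_sum (fun i hi => hViFin i (Finset.mem_range.mp hi))]
        apply ENNReal.toReal_mono hBV
        -- ∑ Vi ≤ total variation
        have key : ∀ k ≤ n, ∑ i ∈ Finset.range k, Vi i
            = eVariationOn f (Set.Icc (x 0) (x k)) := by
          intro k hk
          induction k with
          | zero => simp [Set.Icc_self]
          | succ m ih =>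
            rw [Finset.sum_range_succ, ih (Nat.le_of_succ_le hk)]
            have h1 : x 0 ≤ x m := hle m (Nat.le_of_succ_le hk) 0 (Nat.zero_le _)
            have h2 : x m ≤ x (m+1) := (hmono m (Nat.lt_of_succ_le hk)).le
            have := eVariationOn.Icc_add_Icc (s := Set.univ) f h1 h2 (Set.mem_univ (x m))
            simpa [Set.univ_inter] using this
        rw [key n le_rfl, hx0, hxn]
end

section
/- Deterministic extragradient convergence: let F : ℝ^d → ℝ^d be monotone and L-Lipschitz with a zero z⋆, and consider the unconstrained extragradient iteration y^k = z^k − η F(z^k), z^{k+1} = z^k − η F(y^k) with step size η ∈ (0, 1/(√2·L)]. Then ‖z^{k+1} − z⋆‖² ≤ ‖z^k − z⋆‖² − (1 − η²L²)·‖y^k − z^k‖², and consequently ∑_{k=0}^{∞} ‖y^k − z^k‖² ≤ ‖z^0 − z⋆‖²/(1 − η²L²), which implies min_{k < K} ‖F(z^k)‖² ≤ ‖z^0 − z⋆‖² / (η²(1 − η²L²)·K). -/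
/-!
Expanding the square and using the look-ahead point `y = z - η F z`,
`‖z⁺ - z⋆‖² = ‖z - z⋆‖² - 2η⟪F y, y - z⋆⟫ + η²‖F y - F z‖² - ‖y - z‖²`.
Monotonicity with `F z⋆ = 0` makes the inner product nonnegative and the Lipschitz bound turns
`η²‖F y - F z‖²` into at most `η²L²‖y - z‖²`; this is the Fejér inequality. Telescoping it bounds
`∑ ‖y^k - z^k‖²`, and the smallest of `K` terms is at most their mean.
-/

open Finset
open scoped RealInnerProductSpace

section Extragradient

variable {E : Type*} [NormedAddCommGroup E] [InnerProductSpace ℝ E]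

lemma norm_sub_sq_eq_norm_sq_sub_two_inner_add_norm_sub_sq (a u v : E) :
    ‖a - v‖ ^ 2 = ‖a‖ ^ 2 - 2 * ⟪v, a - u⟫ + ‖v - u‖ ^ 2 - ‖u‖ ^ 2 := by
  simp only [← real_inner_self_eq_norm_sq, inner_sub_left, inner_sub_right, real_inner_comm a v,
    real_inner_comm u v]
  ring

variable {F : E → E} {L η : ℝ}

theorem extragradient_norm_sub_sq_le
    (hmono : ∀ x y, 0 ≤ ⟪F x - F y, x - y⟫) (hlip : ∀ x y, ‖F x - F y‖ ≤ L * ‖x - y‖)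
    {zs : E} (hzs : F zs = 0) (hη : 0 ≤ η) {z y z' : E}
    (hy : y = z - η • F z) (hz' : z' = z - η • F y) :
    ‖z' - zs‖ ^ 2 ≤ ‖z - zs‖ ^ 2 - (1 - η ^ 2 * L ^ 2) * ‖y - z‖ ^ 2 := by
  have hys : y - zs = (z - zs) - η • F z := by rw [hy]; abel
  have hz's : z' - zs = (z - zs) - η • F y := by rw [hz']; abel
  have hyz : ‖y - z‖ = ‖η • F z‖ := by rw [hy, sub_sub_cancel_left, norm_neg]
  have hidentity : ‖z' - zs‖ ^ 2 = ‖z - zs‖ ^ 2 - 2 * η * ⟪F y, y - zs⟫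
      + ‖η • (F y - F z)‖ ^ 2 - ‖y - z‖ ^ 2 := by
    have h := norm_sub_sq_eq_norm_sq_sub_two_inner_add_norm_sub_sq (z - zs) (η • F z) (η • F y)
    rwa [← hys, ← hz's, ← hyz, ← smul_sub, real_inner_smul_left, ← mul_assoc] at h
  have hinner : 0 ≤ ⟪F y, y - zs⟫ := by simpa [hzs] using hmono y zs
  have hlip_step : ‖η • (F y - F z)‖ ≤ η * L * ‖y - z‖ := by
    rw [norm_smul, Real.norm_of_nonneg hη, mul_assoc]
    exact mul_le_mul_of_nonneg_left (hlip y z) hη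
  rw [hidentity]
  nlinarith [mul_nonneg hη hinner, pow_le_pow_left₀ (norm_nonneg _) hlip_step 2]

end Extragradient

lemma sq_mul_sq_le_half {η L : ℝ} (hη : 0 ≤ η) (hL : 0 < L) (h : η ≤ 1 / (√2 * L)) :
    η ^ 2 * L ^ 2 ≤ 1 / 2 := by
  have hle : η * (√2 * L) ≤ 1 := (le_div_iff₀ (by positivity)).mp h
  have hsq : (η * (√2 * L)) ^ 2 = 2 * (η ^ 2 * L ^ 2) := by
    rw [mul_pow, mul_pow, Real.sq_sqrt zero_le_two]; ring
  linarith [pow_le_one₀ (n := 2) (by positivity) hle]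

lemma sum_range_le_div_of_le_sub_mul {a b : ℕ → ℝ} {c : ℝ} (hc : 0 < c) (ha : ∀ k, 0 ≤ a k)
    (hstep : ∀ k, a (k + 1) ≤ a k - c * b k) (K : ℕ) :
    ∑ k ∈ range K, b k ≤ a 0 / c := by
  rw [le_div_iff₀ hc, sum_mul]
  calc ∑ k ∈ range K, b k * c ≤ ∑ k ∈ range K, (a k - a (k + 1)) :=
        sum_le_sum fun k _ ↦ by linarith [hstep k]
    _ = a 0 - a K := sum_range_sub' a K
    _ ≤ a 0 := by linarith [ha K]

lemma exists_lt_le_div_of_sum_range_le {b : ℕ → ℝ} {S : ℝ} {K : ℕ} (hK : 0 < K)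
    (hsum : ∑ k ∈ range K, b k ≤ S) : ∃ k < K, b k ≤ S / K := by
  have hconst : ∑ _k ∈ range K, S / K = S := by
    rw [sum_const, card_range, nsmul_eq_mul]; field_simp
  obtain ⟨k, hk, hle⟩ := exists_le_of_sum_le (nonempty_range_iff.mpr hK.ne') (hsum.trans hconst.ge)
  exact ⟨k, mem_range.mp hk, hle⟩

/-- deterministic extragradient convergence for a monotone `L`-Lipschitz
operator with a zero `z⋆` and step size `η ∈ (0, 1/(√2·L)]`: the per-step Fejér
inequality, the summability of `‖y^k − z^k‖²`, and the best-iterate residual bound. -/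
theorem stmt_11 (d : ℕ) (L η : ℝ) (hL : 0 < L)
    (F : EuclideanSpace ℝ (Fin d) → EuclideanSpace ℝ (Fin d))
    (hmono : ∀ x y, 0 ≤ (inner ℝ (F x - F y) (x - y) : ℝ))
    (hlip : ∀ x y, ‖F x - F y‖ ≤ L * ‖x - y‖)
    (zs : EuclideanSpace ℝ (Fin d)) (hzs : F zs = 0)
    (hη0 : 0 < η) (hη1 : η ≤ 1 / (Real.sqrt 2 * L))
    (z y : ℕ → EuclideanSpace ℝ (Fin d))
    (hy : ∀ k, y k = z k - η • F (z k))
    (hz : ∀ k, z (k + 1) = z k - η • F (y k)) :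
    (∀ k, ‖z (k + 1) - zs‖ ^ 2 ≤
        ‖z k - zs‖ ^ 2 - (1 - η ^ 2 * L ^ 2) * ‖y k - z k‖ ^ 2) ∧
    (∀ K : ℕ, ∑ k ∈ Finset.range K, ‖y k - z k‖ ^ 2 ≤
        ‖z 0 - zs‖ ^ 2 / (1 - η ^ 2 * L ^ 2)) ∧
    (∀ K : ℕ, 0 < K → ∃ k < K,
        ‖F (z k)‖ ^ 2 ≤ ‖z 0 - zs‖ ^ 2 / (η ^ 2 * (1 - η ^ 2 * L ^ 2) * K)) := by
  have hfejer (k : ℕ) := extragradient_norm_sub_sq_le hmono hlip hzs hη0.le (hy k) (hz k)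
  have hcontract : 0 < 1 - η ^ 2 * L ^ 2 := by linarith [sq_mul_sq_le_half hη0.le hL hη1]
  have hsum := sum_range_le_div_of_le_sub_mul hcontract (fun k ↦ sq_nonneg ‖z k - zs‖) hfejer
  refine ⟨hfejer, hsum, fun K hK ↦ ?_⟩
  obtain ⟨k, hk, hle⟩ := exists_lt_le_div_of_sum_range_le hK (hsum K)
  refine ⟨k, hk, ?_⟩
  rw [hy k, sub_sub_cancel_left, norm_neg, norm_smul, Real.norm_of_nonneg hη0.le, mul_pow] at hle
  calc ‖F (z k)‖ ^ 2 = η ^ 2 * ‖F (z k)‖ ^ 2 / η ^ 2 := by field_simp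
    _ ≤ ‖z 0 - zs‖ ^ 2 / (1 - η ^ 2 * L ^ 2) / K / η ^ 2 := by gcongr
    _ = ‖z 0 - zs‖ ^ 2 / (η ^ 2 * (1 - η ^ 2 * L ^ 2) * K) := by
      rw [div_div, div_div]; congr 1; ring
end
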